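/- arXiv:2506.02156 — 3 statements merged into one kernel-verified Lean document; each statement's English description precedes it below -/
import Mathlib

section
/- With the MGA model above, the chi-square statistic satisfies $\sum_{k=0}^d \frac{\mathbb{E}[(O^k - Y^k)^2]}{Y^k} = \frac{m^2}{n}\left(\frac{1}{P_{l_g}} - 1\right) + \frac{(n-m)(d+1-1)}{n}$, i.e., equals $\frac{m^2}{n}\left(\frac{1}{P_{l_g}}-1\right) + \frac{(n-m)\,d}{n}$ when $\sum_{k=0}^d P_k = 1$. -/
/-!
Each summand is a second moment `E[(W + c)²] = Np(1-p) + (Np + c)²` of a binomial variable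
`W ~ Bin(N, p)`, which the moment identities of the Bernstein polynomials provide.
After division by `n P_k`, the variance parts add up to `(n - m) d / n`, and the squared means
add up to `m² / n` times the chi-square divergence `1 / P_{l_g} - 1` of the point mass at `l_g`
from `P`.
-/

open Finset Polynomial

namespace bernsteinPolynomial

variable {R : Type*} [CommRing R]

theorem eval_eq (n ν : ℕ) (x : R) :
    (bernsteinPolynomial R n ν).eval x = n.choose ν * x ^ ν * (1 - x) ^ (n - ν) := by
  simp [bernsteinPolynomial]

theorem sum_eval_mul_add_sq (n : ℕ) (x c : R) :
    ∑ ν ∈ range (n + 1), (bernsteinPolynomial R n ν).eval x * (ν + c) ^ 2 =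
      n * x * (1 - x) + (n * x + c) ^ 2 := by
  have total := congrArg (eval x) (bernsteinPolynomial.sum R n)
  have mean := congrArg (eval x) (bernsteinPolynomial.sum_smul R n)
  have var := congrArg (eval x) (bernsteinPolynomial.variance R n)
  simp only [eval_finsetSum, eval_mul, eval_pow, eval_sub, eval_X, eval_one, eval_natCast,
    nsmul_eq_mul] at total mean var
  set μ : R := n * x
  -- `ν + c = (μ + c) - (μ - ν)`
  have split : ∀ ν : ℕ, (bernsteinPolynomial R n ν).eval x * (ν + c) ^ 2 =
      (μ - ν) ^ 2 * (bernsteinPolynomial R n ν).eval x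
        + 2 * (μ + c) * (ν * (bernsteinPolynomial R n ν).eval x)
        + ((μ + c) ^ 2 - 2 * (μ + c) * μ) * (bernsteinPolynomial R n ν).eval x := fun ν => by
    ring
  simp only [split, sum_add_distrib, ← mul_sum, total, mean, var]
  ring

end bernsteinPolynomial

theorem sum_sq_ite_sub_mul_div {ι K : Type*} [DecidableEq ι] [Field K] {s : Finset ι} {l : ι}
    (hl : l ∈ s) {P : ι → K} (hP : ∀ k ∈ s, P k ≠ 0) (hsum : ∑ k ∈ s, P k = 1) (a : K) :
    ∑ k ∈ s, ((if k = l then a else 0) - a * P k) ^ 2 / P k = a ^ 2 * (1 / P l - 1) := by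
  have term : ∀ k ∈ s, ((if k = l then a else 0) - a * P k) ^ 2 / P k =
      (if k = l then a ^ 2 / P l - 2 * a ^ 2 else 0) + a ^ 2 * P k := by
    intro k hk
    have hPk := hP k hk
    split_ifs with hkl
    · subst hkl; field_simp; ring
    · field_simp; ring
  rw [sum_congr rfl term, sum_add_distrib, sum_ite_eq', if_pos hl, ← mul_sum, hsum]
  ring

theorem stmt3_general (n m d l_g : ℕ) (hm : m ≤ n) (hl : l_g ≤ d)
    (P : ℕ → ℝ) (hP : ∀ k ≤ d, 0 < P k ∧ P k < 1)
    (hsum : ∑ k ∈ Finset.range (d + 1), P k = 1) :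
    ∑ k ∈ Finset.range (d + 1),
        (∑ j ∈ Finset.range (n - m + 1),
            ((n - m).choose j : ℝ) * P k ^ j * (1 - P k) ^ (n - m - j) *
              (((j : ℝ) + (if k = l_g then (m : ℝ) else 0)) - n * P k) ^ 2) /
          ((n : ℝ) * P k) =
      (m : ℝ) ^ 2 / n * (1 / P l_g - 1) + ((n : ℝ) - m) * d / n := by
  have hcompl : ∑ k ∈ range (d + 1), (1 - P k) = d := by simp [sum_sub_distrib, hsum]
  have hP0 : ∀ k ∈ range (d + 1), P k ≠ 0 := fun k hk => (hP k (mem_range_succ_iff.mp hk)).1.ne'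
  have term : ∀ k ∈ range (d + 1),
      (∑ j ∈ range (n - m + 1),
            ((n - m).choose j : ℝ) * P k ^ j * (1 - P k) ^ (n - m - j) *
              (((j : ℝ) + (if k = l_g then (m : ℝ) else 0)) - n * P k) ^ 2) / ((n : ℝ) * P k) =
        ((n - m) * (1 - P k) + ((if k = l_g then (m : ℝ) else 0) - m * P k) ^ 2 / P k) / n := by
    intro k hk
    have hPk := hP0 k hk
    simp_rw [← bernsteinPolynomial.eval_eq, add_sub_assoc,
      bernsteinPolynomial.sum_eval_mul_add_sq, Nat.cast_sub hm]
    field_simp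
    ring
  rw [sum_congr rfl term, ← sum_div, sum_add_distrib, ← mul_sum, hcompl,
    sum_sq_ite_sub_mul_div (mem_range_succ_iff.mpr hl) hP0 hsum]
  ring

/-- Closed form of the expected chi-square statistic under the MGA attack. -/
theorem stmt3 (n m d l_g : ℕ) (hm : m ≤ n) (hn : 0 < n) (hl : l_g ≤ d)
    (P : ℕ → ℝ) (hP : ∀ k ≤ d, 0 < P k ∧ P k < 1)
    (hsum : ∑ k ∈ Finset.range (d + 1), P k = 1) :
    ∑ k ∈ Finset.range (d + 1),
        (∑ j ∈ Finset.range (n - m + 1),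
            ((n - m).choose j : ℝ) * P k ^ j * (1 - P k) ^ (n - m - j) *
              (((j : ℝ) + (if k = l_g then (m : ℝ) else 0)) - n * P k) ^ 2) /
          ((n : ℝ) * P k) =
      (m : ℝ) ^ 2 / n * (1 / P l_g - 1) + ((n : ℝ) - m) * d / n :=
  stmt3_general n m d l_g hm hl P hP hsum
end

section
/- With the APA model above, $\sum_{k=0}^d \frac{\mathbb{E}[(O^k - nP_k)^2]}{nP_k} = \frac{1}{n}\sum_{k=0}^d \frac{(mP_k - \omega_k)^2}{P_k} + \frac{(n-m)\,d}{n}$, assuming $\sum_{k=0}^d P_k = 1$. -/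
/-! Each summand is the second moment of a binomial variable about $nP_k - \omega_k$, i.e. its variance
$(n-m)P_k(1-P_k)$ plus the squared bias $(mP_k - \omega_k)^2$; the binomial moments are read off from the
Bernstein polynomial identities, and $\sum_k (1 - P_k) = d$. -/

open Finset Polynomial

section BinomialMoments

variable {R : Type*} [CommRing R] (n : ℕ) (p : R)

theorem bernsteinPolynomial_eval (ν : ℕ) :
    (bernsteinPolynomial R n ν).eval p = n.choose ν * p ^ ν * (1 - p) ^ (n - ν) := by
  simp [bernsteinPolynomial]

theorem sum_binomial_weights :
    ∑ ν ∈ range (n + 1), (n.choose ν : R) * p ^ ν * (1 - p) ^ (n - ν) = 1 := by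
  simpa [eval_finsetSum, bernsteinPolynomial_eval] using
    congrArg (eval p) (bernsteinPolynomial.sum R n)

theorem sum_binomial_weights_mul_self :
    ∑ ν ∈ range (n + 1), ν * ((n.choose ν : R) * p ^ ν * (1 - p) ^ (n - ν)) = n * p := by
  simpa [eval_finsetSum, bernsteinPolynomial_eval] using
    congrArg (eval p) (bernsteinPolynomial.sum_smul R n)

theorem sum_binomial_weights_mul_sq_sub :
    ∑ ν ∈ range (n + 1), (n * p - ν) ^ 2 * ((n.choose ν : R) * p ^ ν * (1 - p) ^ (n - ν)) =
      n * p * (1 - p) := by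
  simpa [eval_finsetSum, bernsteinPolynomial_eval] using
    congrArg (eval p) (bernsteinPolynomial.variance R n)

theorem sum_binomial_weights_mul_add_sq (c : R) :
    ∑ ν ∈ range (n + 1), (n.choose ν : R) * p ^ ν * (1 - p) ^ (n - ν) * (ν + c) ^ 2 =
      n * p * (1 - p) + (n * p + c) ^ 2 := by
  set w : ℕ → R := fun ν ↦ (n.choose ν : R) * p ^ ν * (1 - p) ^ (n - ν)
  -- expand around the mean: `ν + c = (ν - n * p) + (n * p + c)`
  have split : ∑ ν ∈ range (n + 1), w ν * (ν + c) ^ 2 =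
      ∑ ν ∈ range (n + 1), (n * p - ν) ^ 2 * w ν + 2 * (n * p + c) * ∑ ν ∈ range (n + 1), ν * w ν
        + (n * p + c) * (c - n * p) * ∑ ν ∈ range (n + 1), w ν := by
    rw [mul_sum, mul_sum, ← sum_add_distrib, ← sum_add_distrib]
    exact sum_congr rfl fun ν _ ↦ by ring
  rw [split, sum_binomial_weights_mul_sq_sub, sum_binomial_weights_mul_self, sum_binomial_weights]
  ring

end BinomialMoments

theorem stmt5_general (n m d : ℕ) (hm : m ≤ n)
    (P ω : ℕ → ℝ) (hP : ∀ k ≤ d, 0 < P k ∧ P k < 1)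
    (hsum : ∑ k ∈ Finset.range (d + 1), P k = 1) :
    ∑ k ∈ Finset.range (d + 1),
        (∑ j ∈ Finset.range (n - m + 1),
            ((n - m).choose j : ℝ) * P k ^ j * (1 - P k) ^ (n - m - j) *
              (((j : ℝ) + ω k) - (n : ℝ) * P k) ^ 2) /
          ((n : ℝ) * P k) =
      (1 / (n : ℝ)) * ∑ k ∈ Finset.range (d + 1), ((m : ℝ) * P k - ω k) ^ 2 / P k +
        ((n : ℝ) - m) * d / n := by
  have term : ∀ k ∈ range (d + 1),
      (∑ j ∈ range (n - m + 1), ((n - m).choose j : ℝ) * P k ^ j * (1 - P k) ^ (n - m - j) *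
          (((j : ℝ) + ω k) - n * P k) ^ 2) / (n * P k)
        = ((m * P k - ω k) ^ 2 / P k + (n - m) * (1 - P k)) / n := by
    intro k hk
    have hPk : P k ≠ 0 := (hP k (Nat.lt_succ_iff.mp (mem_range.mp hk))).1.ne'
    simp_rw [add_sub_assoc]
    rw [sum_binomial_weights_mul_add_sq, Nat.cast_sub hm]
    field_simp
    ring
  rw [sum_congr rfl term, ← sum_div, sum_add_distrib, ← mul_sum, sum_sub_distrib, hsum]
  simp only [sum_const, card_range, nsmul_eq_mul, Nat.cast_add, Nat.cast_one]
  ring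

/-- Closed form of the expected chi-square statistic under the APA attack. -/
theorem stmt5 (n m d : ℕ) (hm : m ≤ n) (hn : 0 < n)
    (P ω : ℕ → ℝ) (hP : ∀ k ≤ d, 0 < P k ∧ P k < 1)
    (hω : ∀ k ≤ d, 0 ≤ ω k)
    (hsum : ∑ k ∈ Finset.range (d + 1), P k = 1) :
    ∑ k ∈ Finset.range (d + 1),
        (∑ j ∈ Finset.range (n - m + 1),
            ((n - m).choose j : ℝ) * P k ^ j * (1 - P k) ^ (n - m - j) *
              (((j : ℝ) + ω k) - (n : ℝ) * P k) ^ 2) /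
          ((n : ℝ) * P k) =
      (1 / (n : ℝ)) * ∑ k ∈ Finset.range (d + 1), ((m : ℝ) * P k - ω k) ^ 2 / P k +
        ((n : ℝ) - m) * d / n :=
  stmt5_general n m d hm P ω hP hsum
end

section
/- In OUE, where each bit of a length-$d$ one-hot vector is perturbed independently (the 1-bit kept as 1 with probability $p = 1/2$, each 0-bit flipped to 1 with probability $q = \frac{1}{e^\epsilon+1}$), the mechanism satisfies $\epsilon$-local differential privacy: for any two one-hot inputs $\mathbf{v}_1, \mathbf{v}_2$ and any output vector $\mathbf{y} \in \{0,1\}^d$, $\Pr[\Psi(\mathbf{v}_1) = \mathbf{y}] \le e^\epsilon \Pr[\Psi(\mathbf{v}_2) = \mathbf{y}]$. -/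
/-!
Two one-hot inputs induce product distributions that agree in every coordinate except `v₁`
and `v₂`, so the likelihood ratio reduces to a ratio of two single-coordinate factors. Since
`p = 1/2`, the factors at the hot coordinates cancel, and what remains is the ratio of two
probabilities of the `q`-biased bit, which is at most `(1 - q) / q = e^ε`.
-/

open Finset

section OneHot

variable {ι : Type*} [Fintype ι] [DecidableEq ι]

theorem prod_ite_eq_mul_eq_mul_prod {M : Type*} [CommMonoid M] (f g : ι → M) (v : ι) :
    (∏ i, if i = v then f i else g i) * g v = f v * ∏ i, g i := by
  rw [prod_ite, filter_eq', if_pos (mem_univ v), prod_singleton, filter_ne', mul_assoc,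
    prod_erase_mul _ _ (mem_univ v)]

theorem prod_ite_eq_le_mul_prod_ite_eq {K : Type*} [Field K] [LinearOrder K]
    [IsStrictOrderedRing K] {f g : ι → K} (hg : ∀ i, 0 < g i) {c : K} {v w : ι}
    (h : f v * g w ≤ c * (f w * g v)) :
    (∏ i, if i = v then f i else g i) ≤ c * ∏ i, if i = w then f i else g i := by
  have hG : 0 ≤ ∏ i, g i := (prod_pos fun i _ => hg i).le
  refine le_of_mul_le_mul_right ?_ (mul_pos (hg v) (hg w))
  have hv := prod_ite_eq_mul_eq_mul_prod f g v
  have hw := prod_ite_eq_mul_eq_mul_prod f g w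
  calc (∏ i, if i = v then f i else g i) * (g v * g w)
      = (f v * g w) * ∏ i, g i := by linear_combination g w * hv
    _ ≤ c * (f w * g v) * ∏ i, g i := mul_le_mul_of_nonneg_right h hG
    _ = c * (∏ i, if i = w then f i else g i) * (g v * g w) := by
        linear_combination -(c * g v) * hw

end OneHot

section BiasedBit

variable {ε : ℝ}

theorem exp_mul_inv_exp_add_one :
    Real.exp ε * (1 / (Real.exp ε + 1)) = 1 - 1 / (Real.exp ε + 1) := by
  field_simp
  ring

theorem inv_exp_add_one_le_one_sub (hε : 0 ≤ ε) :
    1 / (Real.exp ε + 1) ≤ 1 - 1 / (Real.exp ε + 1) := by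
  rw [← exp_mul_inv_exp_add_one]
  exact le_mul_of_one_le_left (by positivity) (Real.one_le_exp hε)

theorem biased_bit_prob_le (hε : 0 ≤ ε) (s t : Bool) :
    (if s then 1 / (Real.exp ε + 1) else 1 - 1 / (Real.exp ε + 1)) ≤
      Real.exp ε * if t then 1 / (Real.exp ε + 1) else 1 - 1 / (Real.exp ε + 1) := by
  have hq : 0 ≤ 1 / (Real.exp ε + 1) := by positivity
  have hle := inv_exp_add_one_le_one_sub hε
  have hE := Real.one_le_exp hε
  cases s <;> cases t <;> simp only [Bool.false_eq_true, if_true, if_false]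
  · exact le_mul_of_one_le_left (by linarith) hE
  · exact exp_mul_inv_exp_add_one.ge
  · exact hle.trans (le_mul_of_one_le_left (by linarith) hE)
  · exact le_mul_of_one_le_left hq hE

theorem biased_bit_prob_pos (s : Bool) :
    0 < if s then 1 / (Real.exp ε + 1) else 1 - 1 / (Real.exp ε + 1) := by
  cases s
  · rw [if_neg Bool.false_ne_true, ← exp_mul_inv_exp_add_one]; positivity
  · rw [if_pos rfl]; positivity

end BiasedBit

/-- OUE satisfies ε-local differential privacy. -/
theorem stmt11 (d : ℕ) (ε : ℝ) (hε : 0 < ε) (p q : ℝ)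
    (hp : p = 1 / 2) (hq : q = 1 / (Real.exp ε + 1)) :
    ∀ v₁ v₂ : Fin d, ∀ y : Fin d → Bool,
      (∏ i, if i = v₁ then (if y i then p else 1 - p) else (if y i then q else 1 - q)) ≤
        Real.exp ε *
          ∏ i, if i = v₂ then (if y i then p else 1 - p) else (if y i then q else 1 - q) := by
  intro v₁ v₂ y
  subst hp hq
  have hhot : ∀ b : Bool, (if b then (1 / 2 : ℝ) else 1 - 1 / 2) = 1 / 2 := by
    intro b; cases b <;> norm_num
  refine prod_ite_eq_le_mul_prod_ite_eq (fun i => biased_bit_prob_pos (y i)) ?_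
  rw [hhot, hhot, mul_left_comm]
  exact mul_le_mul_of_nonneg_left (biased_bit_prob_le hε.le _ _) (by norm_num)
end
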